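/- Let μ be a finite measure and ℓ bounded measurable with V_0 = ∫ e^ℓ dμ. Then lim_{a→0} ∫ (F_2(a,ℓ) - F_1(a,ℓ)) dμ / a = -∫ ℓ e^ℓ dμ, where F_k(a,t) = (1+at)^{(1-ka)/a}. -/

import Mathlib

open Real Filter Topology MeasureTheory

lemma abs_log_one_add_le' {u : ℝ} (hu : |u| ≤ 1/2) : |Real.log (1+u)| ≤ 2*|u| := by
  obtain ⟨hu1, hu2⟩ := abs_le.1 hu
  have h0 : (0:ℝ) < 1 + u := by linarith
  have hle : Real.log (1+u) ≤ u := by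
    have := Real.log_le_sub_one_of_pos h0; linarith
  have hge : -(2*|u|) ≤ Real.log (1+u) := by
    have hinv : (0:ℝ) < (1+u)⁻¹ := by positivity
    have h1 := Real.log_le_sub_one_of_pos hinv
    rw [Real.log_inv] at h1
    have h2 : (1+u)⁻¹ - 1 ≤ 2*|u| := by
      rw [inv_eq_one_div, div_sub' (ne_of_gt h0), div_le_iff₀ h0]
      have hne : -u ≤ |u| := neg_le_abs u
      nlinarith [abs_nonneg u]
    linarith
  exact abs_le.2 ⟨by linarith, by linarith [le_abs_self u, abs_nonneg u]⟩

lemma tendsto_exponent' (t : ℝ) :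
    Tendsto (fun a : ℝ => (1 - 2*a)/a * Real.log (1 + a*t)) (𝓝[≠] 0) (𝓝 t) := by
  have hd : HasDerivAt (fun a : ℝ => Real.log (1 + a*t)) t 0 := by
    have h1 : HasDerivAt (fun a : ℝ => 1 + a*t) t 0 := by
      simpa using ((hasDerivAt_id (0:ℝ)).mul_const t).const_add 1
    have h2 := h1.log (by norm_num : (1:ℝ) + 0*t ≠ 0)
    simpa using h2
  have hslope : Tendsto (fun a : ℝ => Real.log (1 + a*t) / a) (𝓝[≠] 0) (𝓝 t) := by
    have h := hasDerivAt_iff_tendsto_slope.1 hd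
    refine h.congr (fun a => ?_)
    simp [slope_def_field, div_eq_mul_inv, mul_comm]
  have hcoef : Tendsto (fun a : ℝ => 1 - 2*a) (𝓝[≠] 0) (𝓝 1) := by
    have h : Tendsto (fun a : ℝ => 1 - 2*a) (𝓝 0) (𝓝 (1 - 2*0)) :=
      (continuous_const.sub (continuous_const.mul continuous_id)).tendsto 0
    simpa using h.mono_left nhdsWithin_le_nhds
  have := hcoef.mul hslope
  rw [one_mul] at this
  exact this.congr (fun a => by ring)

/-- `lim_{a→0} ∫ (F₂(a,ℓ) - F₁(a,ℓ)) dμ / a = -∫ ℓ e^ℓ dμ`. -/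
theorem stmt19 {Ω : Type*} [MeasurableSpace Ω] (μ : Measure Ω) [IsFiniteMeasure μ]
    (ℓ : Ω → ℝ) (hℓ : Measurable ℓ) (C : ℝ) (hC : ∀ x, |ℓ x| ≤ C) :
    Tendsto (fun a : ℝ =>
        (∫ x, ((1 + a * ℓ x) ^ ((1 - 2 * a) / a) - (1 + a * ℓ x) ^ ((1 - a) / a)) ∂μ) / a)
      (𝓝[≠] 0) (𝓝 (-∫ x, ℓ x * Real.exp (ℓ x) ∂μ)) := by
  set D := max C 0 with hDdef
  have hD0 : 0 ≤ D := le_max_right _ _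
  have hℓD : ∀ x, |ℓ x| ≤ D := fun x => (hC x).trans (le_max_left _ _)
  set δ := (2*(D+1))⁻¹ with hδdef
  have hδ0 : 0 < δ := by positivity
  have hδhalf : δ ≤ 1/2 := by
    rw [hδdef]; rw [inv_le_comm₀ (by linarith) (by norm_num)]; norm_num; linarith
  -- for |a| ≤ δ, |a * ℓ x| ≤ 1/2 and 1 + a ℓ x > 0
  have hsmall : ∀ a : ℝ, |a| ≤ δ → ∀ x, |a * ℓ x| ≤ 1/2 := by
    intro a ha x
    rw [abs_mul]
    have h1 : |a| * |ℓ x| ≤ δ * D :=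
      mul_le_mul ha (hℓD x) (abs_nonneg _) (le_of_lt hδ0)
    have h2 : δ * D ≤ 1/2 := by
      rw [hδdef]
      rw [inv_mul_le_iff₀ (by linarith)]
      nlinarith
    linarith
  have hpos : ∀ a : ℝ, |a| ≤ δ → ∀ x, (0:ℝ) < 1 + a * ℓ x := by
    intro a ha x
    have := (abs_le.1 (hsmall a ha x)).1
    linarith
  have hev : ∀ᶠ a in 𝓝[≠] (0:ℝ), |a| ≤ δ ∧ a ≠ 0 := by
    have h1 : ∀ᶠ a in 𝓝 (0:ℝ), |a| ≤ δ := by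
      have := Metric.ball_mem_nhds (0:ℝ) hδ0
      filter_upwards [this] with a ha
      simp only [Metric.mem_ball, Real.dist_eq, sub_zero] at ha
      exact le_of_lt ha
    filter_upwards [nhdsWithin_le_nhds h1, self_mem_nhdsWithin] with a h1 h2
    exact ⟨h1, h2⟩
  -- key convergence for the rewritten integrand
  have key : Tendsto (fun a : ℝ => ∫ x, -(ℓ x * Real.exp ((1 - 2*a)/a * Real.log (1 + a * ℓ x))) ∂μ)
      (𝓝[≠] 0) (𝓝 (-∫ x, ℓ x * Real.exp (ℓ x) ∂μ)) := by
    rw [← integral_neg]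
    refine tendsto_integral_filter_of_dominated_convergence
      (fun _ => D * Real.exp (4*D)) ?_ ?_ (integrable_const _) ?_
    · filter_upwards with a
      exact ((hℓ.mul (Real.measurable_exp.comp (measurable_const.mul
        (Real.measurable_log.comp ((hℓ.const_mul a).const_add 1))))).neg).aestronglyMeasurable
    · filter_upwards [hev] with a ⟨ha, _⟩
      filter_upwards with x
      have hp := hpos a ha x
      have hlog : |Real.log (1 + a * ℓ x)| ≤ 2 * |a * ℓ x| :=
        abs_log_one_add_le' (hsmall a ha x)
      rw [Real.norm_eq_abs, abs_neg, abs_mul]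
      have hrpow : Real.exp ((1 - 2*a)/a * Real.log (1 + a * ℓ x)) ≤ Real.exp (4*D) := by
        apply Real.exp_le_exp.2
        have h1 : |(1 - 2*a)/a * Real.log (1 + a * ℓ x)| ≤ 4*D := by
          rcases eq_or_ne a 0 with rfl | ha0
          · simp; linarith
          · rw [abs_mul, abs_div]
            have h2 : |1 - 2*a| ≤ 2 := by
              have := abs_le.1 ha
              rw [abs_le]; constructor <;> nlinarith [hδhalf]
            have h3 : |Real.log (1 + a * ℓ x)| / |a| ≤ 2 * |ℓ x| := by
              rw [div_le_iff₀ (abs_pos.2 ha0)]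
              calc |Real.log (1 + a * ℓ x)| ≤ 2 * |a * ℓ x| := hlog
                _ = 2 * |ℓ x| * |a| := by rw [abs_mul]; ring
            calc |1 - 2*a| / |a| * |Real.log (1 + a * ℓ x)|
                = |1 - 2*a| * (|Real.log (1 + a * ℓ x)| / |a|) := by ring
              _ ≤ 2 * (2 * |ℓ x|) := by
                  apply mul_le_mul h2 h3 (by positivity) (by norm_num)
              _ ≤ 4*D := by have := hℓD x; linarith
        linarith [(abs_le.1 h1).2]
      calc |ℓ x| * |Real.exp ((1 - 2*a)/a * Real.log (1 + a * ℓ x))|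
          = |ℓ x| * Real.exp ((1 - 2*a)/a * Real.log (1 + a * ℓ x)) := by
            rw [abs_of_nonneg (Real.exp_nonneg _)]
        _ ≤ D * Real.exp (4*D) := by
            apply mul_le_mul (hℓD x) hrpow (Real.exp_nonneg _) hD0
    · filter_upwards with x
      have hx : Tendsto (fun a : ℝ => Real.exp ((1 - 2*a)/a * Real.log (1 + a * ℓ x)))
          (𝓝[≠] 0) (𝓝 (Real.exp (ℓ x))) :=
        (Real.continuous_exp.tendsto _).comp (tendsto_exponent' (ℓ x))
      have := (tendsto_const_nhds (x := ℓ x)).mul hx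
      simpa using this.neg
  -- relate original expression to the key integrand
  apply key.congr'
  filter_upwards [hev] with a ⟨ha, ha0⟩
  rw [← integral_div]
  refine integral_congr_ae (Eventually.of_forall fun x => ?_)
  have hp := hpos a ha x
  have hne := ne_of_gt hp
  have hexp : (1 - a)/a = (1 - 2*a)/a + 1 := by field_simp; ring
  show -(ℓ x * Real.exp ((1 - 2*a)/a * Real.log (1 + a * ℓ x)))
      = ((1 + a * ℓ x) ^ ((1 - 2*a)/a) - (1 + a * ℓ x) ^ ((1 - a) / a)) / a
  rw [mul_comm ((1 - 2*a)/a), ← Real.rpow_def_of_pos hp, hexp, Real.rpow_add hp, Real.rpow_one]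
  field_simp
  ring
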